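/- arXiv:0804.4787 — 10 statements merged into one kernel-verified Lean document; each statement's English description precedes it below -/
import Mathlib

section
/- Let h = g ⋉_ρ V carry a totally real integrable complex structure J with Jg = V. Then γ(x)y := −Jρ(x)Jy defines a flat torsion-free connection on g. -/
/-- If `h = g ⋉_ρ V` carries a totally real integrable complex structure `J`
with `Jg = V`, then `γ(x)y := −Jρ(x)Jy = −J⁅x, Jy⁆` defines a flat torsion-free
connection on `g`. -/
theorem totallyReal_complex_gives_flat_torsionFree
    (h : Type*) [LieRing h] [LieAlgebra ℝ h]
    (g V : Submodule ℝ h)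
    (hsub : ∀ x ∈ g, ∀ y ∈ g, ⁅x, y⁆ ∈ g)
    (hideal : ∀ x : h, ∀ v ∈ V, ⁅x, v⁆ ∈ V)
    (habelian : ∀ u ∈ V, ∀ v ∈ V, ⁅u, v⁆ = (0 : h))
    (hcompl : IsCompl g V)
    (J : h →ₗ[ℝ] h) (hJ : ∀ x : h, J (J x) = -x)
    (hJg : g.map J = V)
    (hint : ∀ x y : h, ⁅x, y⁆ - ⁅J x, J y⁆ + J (⁅x, J y⁆ + ⁅J x, y⁆) = 0) :
    -- γ x y := -J ⁅x, J y⁆ takes values in g ...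
    (∀ x ∈ g, ∀ y ∈ g, -J ⁅x, J y⁆ ∈ g) ∧
    -- ... is torsion-free : [x,y] = γ x y - γ y x ...
    (∀ x ∈ g, ∀ y ∈ g, ⁅x, y⁆ = -J ⁅x, J y⁆ - (-J ⁅y, J x⁆)) ∧
    -- ... and flat : γ [x,y] = γ x ∘ γ y - γ y ∘ γ x.
    (∀ x ∈ g, ∀ y ∈ g, ∀ z ∈ g,
      -J ⁅⁅x, y⁆, J z⁆ =
        -J ⁅x, J (-J ⁅y, J z⁆)⁆ - (-J ⁅y, J (-J ⁅x, J z⁆)⁆)) := by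
  -- `J` maps `g` into `V` ...
  have hgV : ∀ x ∈ g, J x ∈ V := by
    intro x hx
    rw [← hJg]
    exact Submodule.mem_map_of_mem hx
  -- ... and `V` into `g`.
  have hVg : ∀ v ∈ V, J v ∈ g := by
    intro v hv
    rw [← hJg] at hv
    obtain ⟨w, hw, rfl⟩ := hv
    rw [hJ]
    exact neg_mem hw
  refine ⟨?_, ?_, ?_⟩
  · -- values in g
    intro x hx y hy
    exact neg_mem (hVg _ (hideal x _ (hgV y hy)))
  · -- torsion-free
    intro x hx y hy
    have h1 : ⁅J x, J y⁆ = (0 : h) := habelian _ (hgV x hx) _ (hgV y hy)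
    have e := hint x y
    rw [h1, map_add] at e
    simp only [sub_zero] at e
    have e' := eq_neg_of_add_eq_zero_left e
    rw [e', ← lie_skew y (J x), map_neg]
    abel
  · -- flat
    intro x hx y hy z hz
    have key : ∀ w : h, J (-J w) = w := by
      intro w; rw [map_neg, hJ, neg_neg]
    rw [key, key, lie_lie, map_sub]
    abel
end

section
/- Let γ be a flat torsion-free connection on a Lie algebra g. Then on the semi-direct product h = g ⋉_γ g (with g acting on a copy of itself via γ), the complex structure J(x,y) = (−y, x) is integrable. -/
/-- If `γ` is a flat torsion-free connection on a Lie algebra `g`, then on the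
semi-direct product `h = g ⋉_γ g` the complex structure `J(x,y) = (−y,x)` is
integrable (its Nijenhuis tensor vanishes). -/
theorem flat_torsionFree_gives_integrable_J
    (g : Type*) [LieRing g] [LieAlgebra ℝ g]
    (γ : g →ₗ[ℝ] Module.End ℝ g)
    (htf : ∀ x y : g, ⁅x, y⁆ = γ x y - γ y x)
    (hflat : ∀ x y : g, γ ⁅x, y⁆ = γ x * γ y - γ y * γ x) :
    let B : (g × g) → (g × g) → (g × g) :=
      fun p q => (⁅p.1, q.1⁆, γ p.1 q.2 - γ q.1 p.2)
    let J : (g × g) → (g × g) := fun p => (-p.2, p.1)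
    ∀ p q : g × g, B p q - B (J p) (J q) + J (B p (J q) + B (J p) q) = 0 := by
  intro B J p q
  obtain ⟨x, u⟩ := p
  obtain ⟨y, v⟩ := q
  simp only [B, J, htf, map_neg, LinearMap.neg_apply, Prod.mk.injEq, Prod.mk_add_mk,
    Prod.mk_sub_mk, Prod.neg_mk, Prod.ext_iff, Prod.fst_zero, Prod.snd_zero]
  constructor <;> abel
end

section
/- Let h = g ⋉_ρ V be a Lagrangian semi-direct product with respect to a closed non-degenerate 2-form ω (so g and V are both Lagrangian). Then γ(x)y := ω⁻¹(ρ*(x)ω(y)) defines a flat torsion-free connection on g, where ρ* : g → End(V*) is the dual representation (ρ*(x)α)(u) = −α(ρ(x)u) and ω identifies g ≅ Ann(g)* ≅ V* appropriately. -/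
/-- If `h = g ⋉_ρ V` is a Lagrangian semi-direct product with respect to a
symplectic form `ω`, then `γ(x)y := ω⁻¹(ρ*(x)ω(y))` — i.e. the unique element
of `g` with `ω(γ(x)y, u) = −ω(y, [x,u])` for all `u ∈ V` — defines a flat
torsion-free connection on `g`. -/
theorem lagrangian_semidirect_gives_flat_torsionFree
    (h : Type*) [LieRing h] [LieAlgebra ℝ h] [FiniteDimensional ℝ h]
    (g V : Submodule ℝ h)
    (hsub : ∀ x ∈ g, ∀ y ∈ g, ⁅x, y⁆ ∈ g)
    (hideal : ∀ x : h, ∀ v ∈ V, ⁅x, v⁆ ∈ V)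
    (habelian : ∀ u ∈ V, ∀ v ∈ V, ⁅u, v⁆ = (0 : h))
    (hcompl : IsCompl g V)
    (ω : h →ₗ[ℝ] Module.Dual ℝ h)
    (hskew : ∀ x y : h, ω x y = -ω y x)
    (hnd : Function.Bijective ω)
    (hclosed : ∀ x y z : h, ω ⁅x, y⁆ z + ω ⁅y, z⁆ x + ω ⁅z, x⁆ y = 0)
    (hgL : ∀ x ∈ g, ∀ y ∈ g, ω x y = 0)
    (hVL : ∀ u ∈ V, ∀ v ∈ V, ω u v = 0) :
    ∃ γ : h → h → h,
      (∀ x ∈ g, ∀ y ∈ g, γ x y ∈ g) ∧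
      (∀ x ∈ g, ∀ y ∈ g, ∀ u ∈ V, ω (γ x y) u = -ω y ⁅x, u⁆) ∧
      (∀ x ∈ g, ∀ y ∈ g, ⁅x, y⁆ = γ x y - γ y x) ∧
      (∀ x ∈ g, ∀ y ∈ g, ∀ z ∈ g, γ ⁅x, y⁆ z = γ x (γ y z) - γ y (γ x z)) := by
  classical
  -- Uniqueness: an element of `g` that pairs trivially with all of `V` is zero.
  have U : ∀ z ∈ g, (∀ u ∈ V, ω z u = 0) → z = 0 := by
    intro z hz h0
    apply hnd.1
    rw [map_zero]
    ext w
    have hw : w ∈ g ⊔ V := by rw [hcompl.sup_eq_top]; trivial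
    obtain ⟨a, ha, b, hb, rfl⟩ := Submodule.mem_sup.mp hw
    simp [hgL z hz a ha, h0 b hb]
  -- Uniqueness in usable form.
  have U2 : ∀ z₁ ∈ g, ∀ z₂ ∈ g, (∀ u ∈ V, ω z₁ u = ω z₂ u) → z₁ = z₂ := by
    intro z₁ h1 z₂ h2 heq
    have := U (z₁ - z₂) (sub_mem h1 h2) (fun u hu => by simp [heq u hu])
    exact sub_eq_zero.mp this
  -- The pairing `g → Dual V` is bijective.
  set L : g →ₗ[ℝ] Module.Dual ℝ V := V.subtype.dualMap.comp (ω.comp g.subtype) with hLdef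
  have hLapp : ∀ (z : g) (u : V), L z u = ω (z : h) (u : h) := fun _ _ => rfl
  have hLinj : Function.Injective L := by
    rw [← LinearMap.ker_eq_bot, LinearMap.ker_eq_bot']
    intro z hz
    have : (z : h) = 0 := U z z.2 (fun u hu => by
      have := congrArg (fun f => f ⟨u, hu⟩) (congrArg (fun m => m) hz)
      exact (hLapp z ⟨u, hu⟩).symm.trans (congrFun (congrArg DFunLike.coe hz) ⟨u, hu⟩))
    exact Subtype.ext this
  have hMinj : Function.Injective (g.subtype.dualMap.comp (ω.comp V.subtype)) := by
    rw [← LinearMap.ker_eq_bot, LinearMap.ker_eq_bot']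
    intro v hv
    have hv0 : (v : h) = 0 := by
      apply hnd.1
      rw [map_zero]
      ext w
      have hw : w ∈ g ⊔ V := by rw [hcompl.sup_eq_top]; trivial
      obtain ⟨a, ha, b, hb, rfl⟩ := Submodule.mem_sup.mp hw
      have h1 : ω (v : h) a = 0 := congrFun (congrArg DFunLike.coe hv) ⟨a, ha⟩
      simp [h1, hVL v v.2 b hb]
    exact Subtype.ext hv0
  have hdim : Module.finrank ℝ g = Module.finrank ℝ (Module.Dual ℝ V) := by
    have d1 : Module.finrank ℝ g ≤ Module.finrank ℝ (Module.Dual ℝ V) :=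
      LinearMap.finrank_le_finrank_of_injective hLinj
    have d2 : Module.finrank ℝ V ≤ Module.finrank ℝ (Module.Dual ℝ g) :=
      LinearMap.finrank_le_finrank_of_injective hMinj
    rw [Subspace.dual_finrank_eq] at d1 d2 ⊢
    omega
  have hLsurj : Function.Surjective L :=
    (LinearMap.injective_iff_surjective_of_finrank_eq_finrank hdim).mp hLinj
  -- The connection.
  set ad : h → h →ₗ[ℝ] h := fun x => LieAlgebra.ad ℝ h x with had
  set γ : h → h → h := fun x y =>
    if hx : x ∈ g ∧ y ∈ g then
      ((Function.surjInv hLsurj (-(((ω y).comp (ad x)).comp V.subtype)) : g) : h)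
    else 0 with hγ
  have hγeq : ∀ x ∈ g, ∀ y ∈ g, γ x y =
      ((Function.surjInv hLsurj (-(((ω y).comp (ad x)).comp V.subtype)) : g) : h) := by
    intro x hx y hy
    simp only [hγ]
    rw [dif_pos (show x ∈ g ∧ y ∈ g from ⟨hx, hy⟩)]
  have mem : ∀ x ∈ g, ∀ y ∈ g, γ x y ∈ g := by
    intro x hx y hy
    rw [hγeq x hx y hy]
    exact (Function.surjInv hLsurj (-(((ω y).comp (ad x)).comp V.subtype))).2
  have key : ∀ x ∈ g, ∀ y ∈ g, ∀ u ∈ V, ω (γ x y) u = -ω y ⁅x, u⁆ := by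
    intro x hx y hy u hu
    rw [hγeq x hx y hy]
    have hs := Function.surjInv_eq hLsurj (-(((ω y).comp (ad x)).comp V.subtype))
    have hs' := congrFun (congrArg DFunLike.coe hs) ⟨u, hu⟩
    simpa [hLapp, had, LieAlgebra.ad_apply] using hs'
  refine ⟨γ, mem, key, ?_, ?_⟩
  · -- torsion-free
    intro x hx y hy
    refine U2 _ (hsub x hx y hy) _ (sub_mem (mem x hx y hy) (mem y hy x hx)) ?_
    intro u hu
    have hc := hclosed x y u
    have h1 : ω (γ x y) u = -ω y ⁅x, u⁆ := key x hx y hy u hu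
    have h2 : ω (γ y x) u = -ω x ⁅y, u⁆ := key y hy x hx u hu
    have hs1 : ω ⁅y, u⁆ x = -ω x ⁅y, u⁆ := hskew _ _
    have e1 : ω ⁅u, x⁆ y = ω y ⁅x, u⁆ := by
      have hl : (⁅u, x⁆ : h) = -⁅x, u⁆ := (lie_skew u x).symm
      rw [hl, map_neg, LinearMap.neg_apply, hskew ⁅x, u⁆ y, neg_neg]
    simp only [map_sub, LinearMap.sub_apply, h1, h2]
    linarith
  · -- flatness
    intro x hx y hy z hz
    have hyz := mem y hy z hz
    have hxz := mem x hx z hz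
    refine U2 _ (mem _ (hsub x hx y hy) _ hz) _
      (sub_mem (mem x hx _ hyz) (mem y hy _ hxz)) ?_
    intro u hu
    have hL : ω (γ ⁅x, y⁆ z) u = -ω z ⁅⁅x, y⁆, u⁆ := key _ (hsub x hx y hy) z hz u hu
    -- first RHS term
    have hxu : (⁅x, u⁆ : h) ∈ V := hideal x u hu
    have hyu : (⁅y, u⁆ : h) ∈ V := hideal y u hu
    have h1 : ω (γ x (γ y z)) u = -ω (γ y z) ⁅x, u⁆ := key x hx _ hyz u hu
    have h2 : ω (γ y (γ x z)) u = -ω (γ x z) ⁅y, u⁆ := key y hy _ hxz u hu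
    have h3 : ω (γ y z) ⁅x, u⁆ = -ω z ⁅y, ⁅x, u⁆⁆ := key y hy z hz _ hxu
    have h4 : ω (γ x z) ⁅y, u⁆ = -ω z ⁅x, ⁅y, u⁆⁆ := key x hx z hz _ hyu
    have hjac : (⁅⁅x, y⁆, u⁆ : h) = ⁅x, ⁅y, u⁆⁆ - ⁅y, ⁅x, u⁆⁆ := by
      rw [lie_lie]
    simp only [map_sub, LinearMap.sub_apply, hL, h1, h2, h3, h4, hjac]
    linarith
end

section
/- Let γ be a flat torsion-free connection on a Lie algebra g, and form h = g ⋉_{γ*} g* via the dual representation γ*. Then the standard skew pairing ω(x+u, y+v) = u(y) − v(x) (x,y ∈ g, u,v ∈ g*) is a symplectic form on h with both g and g* Lagrangian. -/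
/-- If `γ` is a flat torsion-free connection on `g`, then the standard skew
pairing `ω(x+u, y+v) = u(y) − v(x)` on `h = g ⋉_{γ*} g*` is a symplectic form
for which both `g` and `g*` are Lagrangian. -/
theorem dual_semidirect_standard_pairing_symplectic
    (g : Type*) [LieRing g] [LieAlgebra ℝ g] [FiniteDimensional ℝ g]
    (γ : g →ₗ[ℝ] Module.End ℝ g)
    (htf : ∀ x y : g, ⁅x, y⁆ = γ x y - γ y x)
    (hflat : ∀ x y : g, γ ⁅x, y⁆ = γ x * γ y - γ y * γ x) :
    -- bracket of g ⋉_{γ*} g*, where (γ*(x)α)(y) = −α(γ(x)y)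
    let B : (g × Module.Dual ℝ g) → (g × Module.Dual ℝ g) → (g × Module.Dual ℝ g) :=
      fun p q => (⁅p.1, q.1⁆, p.2 ∘ₗ (γ q.1) - q.2 ∘ₗ (γ p.1))
    let ω : (g × Module.Dual ℝ g) → (g × Module.Dual ℝ g) → ℝ :=
      fun p q => p.2 q.1 - q.2 p.1
    -- ω is closed ...
    (∀ p q r, ω (B p q) r + ω (B q r) p + ω (B r p) q = 0) ∧
    -- ... non-degenerate ...
    (∀ p, (∀ q, ω p q = 0) → p = 0) ∧
    -- ... and g and g* are Lagrangian
    (∀ x y : g, ω (x, (0 : Module.Dual ℝ g)) (y, (0 : Module.Dual ℝ g)) = 0) ∧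
    (∀ u v : Module.Dual ℝ g, ω ((0 : g), u) ((0 : g), v) = 0) := by
  intro B ω
  refine ⟨?_, ?_, ?_, ?_⟩
  · intro p q r
    simp only [B, ω, LinearMap.sub_apply, LinearMap.comp_apply]
    rw [htf p.1 q.1, htf q.1 r.1, htf r.1 p.1]
    simp only [map_sub]
    ring
  · intro p hp
    have h1 : p.2 = 0 := by
      ext y
      have := hp (y, 0)
      simpa [ω] using this
    have h2 : p.1 = 0 := by
      rw [← Module.forall_dual_apply_eq_zero_iff ℝ]
      intro v
      have := hp (0, v)
      simp [ω, h1] at this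
      simpa using this
    exact Prod.ext h2 h1
  · intro x y; simp [ω]
  · intro u v; simp [ω]
end

section
/- Let h = g ⋉_ρ V be a semi-direct product with a totally real complex structure J (Jg = V), and let h∨ = g ⋉_{ρ*} V* be the dual semi-direct product. Define ω_J on h∨ by ω_J(x+u, y+v) = v(Jx) − u(Jy) for x,y ∈ g, u,v ∈ V*. Then ω_J is non-degenerate with g and V* Lagrangian, and ω_J is closed if and only if J is integrable. -/
/-- Let `h = g ⋉_ρ V` carry a totally real complex structure `J` (`Jg = V`),
and let `h∨ = g ⋉_{ρ*} V*` be the dual semi-direct product.  The 2-form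
`ω_J(x+u, y+v) = v(Jx) − u(Jy)` on `h∨` is non-degenerate with `g` and `V*`
Lagrangian, and it is closed iff `J` is integrable. -/
theorem omegaJ_nondeg_lagrangian_closed_iff_integrable
    (g V : Type*) [LieRing g] [LieAlgebra ℝ g] [FiniteDimensional ℝ g]
    [AddCommGroup V] [Module ℝ V] [FiniteDimensional ℝ V]
    (ρ : g →ₗ[ℝ] Module.End ℝ V)
    (hrep : ∀ x y : g, ρ ⁅x, y⁆ = ρ x * ρ y - ρ y * ρ x)
    (J : (g × V) →ₗ[ℝ] (g × V))
    (hJ2 : ∀ p : g × V, J (J p) = -p)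
    (hJg : ∀ x : g, (J (x, (0 : V))).1 = 0)
    (hJV : ∀ u : V, (J ((0 : g), u)).2 = 0) :
    -- bracket of h = g ⋉_ρ V
    let B : (g × V) → (g × V) → (g × V) :=
      fun p q => (⁅p.1, q.1⁆, ρ p.1 q.2 - ρ q.1 p.2)
    -- bracket of h∨ = g ⋉_{ρ*} V*, with (ρ*(x)α)(u) = −α(ρ(x)u)
    let Bd : (g × Module.Dual ℝ V) → (g × Module.Dual ℝ V) → (g × Module.Dual ℝ V) :=
      fun p q => (⁅p.1, q.1⁆, p.2 ∘ₗ (ρ q.1) - q.2 ∘ₗ (ρ p.1))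
    -- ω_J(x+u, y+v) = v(Jx) − u(Jy)
    let ωJ : (g × Module.Dual ℝ V) → (g × Module.Dual ℝ V) → ℝ :=
      fun p q => q.2 ((J (p.1, (0 : V))).2) - p.2 ((J (q.1, (0 : V))).2)
    -- non-degenerate
    (∀ p, (∀ q, ωJ p q = 0) → p = 0) ∧
    -- g and V* are Lagrangian
    (∀ x y : g, ωJ (x, (0 : Module.Dual ℝ V)) (y, (0 : Module.Dual ℝ V)) = 0) ∧
    (∀ u v : Module.Dual ℝ V, ωJ ((0 : g), u) ((0 : g), v) = 0) ∧
    -- ω_J is closed iff J is integrable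
    ((∀ p q r, ωJ (Bd p q) r + ωJ (Bd q r) p + ωJ (Bd r p) q = 0) ↔
      (∀ p q : g × V, B p q - B (J p) (J q) + J (B p (J q) + B (J p) q) = 0)) := by
  intro B Bd ωJ
  set φ : g →ₗ[ℝ] V := (LinearMap.snd ℝ g V) ∘ₗ (J ∘ₗ (LinearMap.inl ℝ g V)) with hφdef
  set ψ : V →ₗ[ℝ] g := (LinearMap.fst ℝ g V) ∘ₗ (J ∘ₗ (LinearMap.inr ℝ g V)) with hψdef
  have hφx : ∀ x : g, J (x, (0 : V)) = (0, φ x) := fun x => Prod.ext (hJg x) rfl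
  have hψu : ∀ u : V, J ((0 : g), u) = (ψ u, 0) := fun u => Prod.ext rfl (hJV u)
  have hψφ : ∀ x : g, ψ (φ x) = -x := by
    intro x
    have h := hJ2 (x, (0 : V))
    rw [hφx x, hψu (φ x)] at h
    simpa using congrArg Prod.fst h
  have hφψ : ∀ u : V, φ (ψ u) = -u := by
    intro u
    have h := hJ2 ((0 : g), u)
    rw [hψu u, hφx (ψ u)] at h
    simpa using congrArg Prod.snd h
  have hJp : ∀ (x : g) (u : V), J (x, u) = (ψ u, φ x) := by
    intro x u
    have h : (x, u) = (x, (0 : V)) + ((0 : g), u) := by simp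
    rw [h, map_add, hφx, hψu, Prod.mk_add_mk, zero_add, add_zero]
  have hω : ∀ p q, ωJ p q = q.2 (φ p.1) - p.2 (φ q.1) := by
    intro p q
    show q.2 ((J (p.1, (0 : V))).2) - p.2 ((J (q.1, (0 : V))).2) = _
    rw [hφx, hφx]
  refine ⟨?_, ?_, ?_, ?_⟩
  · -- non-degeneracy
    intro p hp
    have hu : p.2 = 0 := by
      ext w
      have h := hp (ψ (-w), 0)
      rw [hω] at h
      simp only [LinearMap.zero_apply, zero_sub, neg_eq_zero, hφψ] at h
      simpa using h
    have hx : p.1 = 0 := by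
      have hφp : φ p.1 = 0 := by
        rw [← Module.forall_dual_apply_eq_zero_iff ℝ]
        intro v
        have h := hp ((0 : g), v)
        rw [hω] at h
        simpa [hu] using h
      have := hψφ p.1
      rw [hφp, map_zero] at this
      simpa using this.symm
    exact Prod.ext hx hu
  · intro x y; simp [hω]
  · intro u v; simp [hω]
  · -- closed iff integrable, via T(x,y) = 0
    have closed_of_T : (∀ x y : g, φ ⁅x, y⁆ = ρ x (φ y) - ρ y (φ x)) →
        ∀ p q r, ωJ (Bd p q) r + ωJ (Bd q r) p + ωJ (Bd r p) q = 0 := by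
      intro hT p q r
      obtain ⟨x, u⟩ := p; obtain ⟨y, v⟩ := q; obtain ⟨z, w⟩ := r
      have hBd : ∀ a b : g × Module.Dual ℝ V,
          Bd a b = (⁅a.1, b.1⁆, a.2 ∘ₗ (ρ b.1) - b.2 ∘ₗ (ρ a.1)) := fun _ _ => rfl
      rw [hBd, hBd, hBd, hω, hω, hω]
      simp only [hT, LinearMap.sub_apply, LinearMap.comp_apply, map_sub]
      ring
    have T_of_closed : (∀ p q r, ωJ (Bd p q) r + ωJ (Bd q r) p + ωJ (Bd r p) q = 0) →
        ∀ x y : g, φ ⁅x, y⁆ = ρ x (φ y) - ρ y (φ x) := by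
      intro hc x y
      rw [← sub_eq_zero, ← Module.forall_dual_apply_eq_zero_iff ℝ]
      intro w
      have h := hc (x, 0) (y, 0) (0, w)
      rw [hω, hω, hω] at h
      simp only [map_sub] at h ⊢
      simp only [Bd, LinearMap.sub_apply, LinearMap.comp_apply, LinearMap.zero_apply,
        lie_zero, zero_lie, map_zero, zero_sub, sub_zero, neg_zero, sub_neg_eq_add,
        add_zero, zero_add, neg_sub, neg_neg] at h
      linarith [h]
    have int_of_T : (∀ x y : g, φ ⁅x, y⁆ = ρ x (φ y) - ρ y (φ x)) →
        ∀ p q : g × V, B p q - B (J p) (J q) + J (B p (J q) + B (J p) q) = 0 := by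
      intro hT p q
      obtain ⟨x, u⟩ := p; obtain ⟨y, v⟩ := q
      rw [hJp x u, hJp y v]
      show (⁅x, y⁆, ρ x v - ρ y u) - (⁅ψ u, ψ v⁆, ρ (ψ u) (φ y) - ρ (ψ v) (φ x))
          + J ((⁅x, ψ v⁆, ρ x (φ y) - ρ (ψ v) u) + (⁅ψ u, y⁆, ρ (ψ u) v - ρ y (φ x))) = 0
      rw [Prod.mk_add_mk, hJp]
      have h2 : φ ⁅ψ u, ψ v⁆ = ρ (ψ v) u - ρ (ψ u) v := by
        rw [hT (ψ u) (ψ v), hφψ, hφψ, map_neg, map_neg]; abel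
      have harg : (ρ x (φ y) - ρ (ψ v) u) + (ρ (ψ u) v - ρ y (φ x))
          = φ ⁅x, y⁆ - φ ⁅ψ u, ψ v⁆ := by
        rw [hT x y, h2]; abel
      have hargψ : ψ ((ρ x (φ y) - ρ (ψ v) u) + (ρ (ψ u) v - ρ y (φ x)))
          = -⁅x, y⁆ + ⁅ψ u, ψ v⁆ := by
        rw [harg, map_sub, hψφ, hψφ]; abel
      have hfst : φ (⁅x, ψ v⁆ + ⁅ψ u, y⁆)
          = -(ρ x v) - ρ (ψ v) (φ x) + (ρ (ψ u) (φ y) + ρ y u) := by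
        rw [map_add, hT x (ψ v), hT (ψ u) y, hφψ, hφψ, map_neg, map_neg]; abel
      rw [Prod.mk_sub_mk, Prod.mk_add_mk, hargψ, hfst, Prod.mk_eq_zero]
      constructor
      · module
      · module
    have T_of_int : (∀ p q : g × V, B p q - B (J p) (J q) + J (B p (J q) + B (J p) q) = 0) →
        ∀ x y : g, φ ⁅x, y⁆ = ρ x (φ y) - ρ y (φ x) := by
      intro hi x y
      have h := hi (x, (0 : V)) (y, (0 : V))
      rw [hφx x, hφx y] at h
      have hB : ∀ a b : g × V, B a b = (⁅a.1, b.1⁆, ρ a.1 b.2 - ρ b.1 a.2) := fun _ _ => rfl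
      rw [hB, hB, hB, hB] at h
      simp only [lie_zero, zero_lie, map_zero, LinearMap.zero_apply, sub_zero, zero_sub,
        Prod.mk_add_mk, add_zero, zero_add] at h
      rw [hJp] at h
      have h1 := congrArg Prod.fst h
      simp only [Prod.fst_sub, Prod.fst_add, Prod.fst_zero] at h1
      -- h1 : ⁅x,y⁆ - ⁅0,0⁆-part + ψ(ρ x (φ y) + -(ρ y (φ x))) = 0 (roughly)
      have h1' : ⁅x, y⁆ + ψ (ρ x (φ y) + -(ρ y (φ x))) = 0 := by
        simpa using h1
      have h2 := congrArg φ h1'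
      rw [map_add, map_zero, hφψ] at h2
      have : φ ⁅x, y⁆ - (ρ x (φ y) + -(ρ y (φ x))) = 0 := by
        rw [sub_eq_zero]
        have := h2
        linear_combination (norm := abel) this
      rw [sub_eq_zero] at this
      rw [this]; abel
    constructor
    · intro hc; exact int_of_T (T_of_closed hc)
    · intro hi; exact closed_of_T (T_of_int hi)
end

section
/- Let h = g ⋉_ρ V be a Lagrangian semi-direct product with non-degenerate 2-form ω. On h∨ = g ⋉_{ρ*} V*, define J_ω(x + u) = −ω⁻¹(u) + ω(x) (using ω to identify V ≅ Ann(g) ≅ V* etc., treating u ∈ V*). Then J_ω is a totally real complex structure on h∨, and J_ω is integrable if and only if ω is closed. -/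
/-- Let `h = g ⋉_ρ V` be a Lagrangian semi-direct product with respect to a
non-degenerate 2-form `ω`.  On `h∨ = g ⋉_{ρ*} V*` the map
`J_ω(x + u) = −ω⁻¹(u) + ω(x)` is a totally real complex structure, and it is
integrable iff `ω` is closed. -/
theorem Jomega_totallyReal_integrable_iff_closed
    (g V : Type*) [LieRing g] [LieAlgebra ℝ g] [FiniteDimensional ℝ g]
    [AddCommGroup V] [Module ℝ V] [FiniteDimensional ℝ V]
    (ρ : g →ₗ[ℝ] Module.End ℝ V)
    (hrep : ∀ x y : g, ρ ⁅x, y⁆ = ρ x * ρ y - ρ y * ρ x)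
    (ω : (g × V) →ₗ[ℝ] (g × V) →ₗ[ℝ] ℝ)
    (hskew : ∀ p q : g × V, ω p q = -ω q p)
    (hnd : ∀ p : g × V, (∀ q, ω p q = 0) → p = 0)
    (hgL : ∀ x y : g, ω (x, (0 : V)) (y, (0 : V)) = 0)
    (hVL : ∀ u v : V, ω ((0 : g), u) ((0 : g), v) = 0) :
    -- bracket of h = g ⋉_ρ V
    let B : (g × V) → (g × V) → (g × V) :=
      fun p q => (⁅p.1, q.1⁆, ρ p.1 q.2 - ρ q.1 p.2)
    -- bracket of h∨ = g ⋉_{ρ*} V*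
    let Bd : (g × Module.Dual ℝ V) → (g × Module.Dual ℝ V) → (g × Module.Dual ℝ V) :=
      fun p q => (⁅p.1, q.1⁆, p.2 ∘ₗ (ρ q.1) - q.2 ∘ₗ (ρ p.1))
    ∃ Jw : (g × Module.Dual ℝ V) →ₗ[ℝ] (g × Module.Dual ℝ V),
      -- J_ω(x) = ω(x) ∈ V* (totally real: J_ω g ⊆ V*)
      (∀ x : g, (Jw (x, (0 : Module.Dual ℝ V))).1 = 0 ∧
        ∀ v : V, (Jw (x, (0 : Module.Dual ℝ V))).2 v = ω (x, (0 : V)) ((0 : g), v)) ∧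
      -- J_ω(u) = −ω⁻¹(u) ∈ g (totally real: J_ω V* ⊆ g)
      (∀ u : Module.Dual ℝ V, (Jw ((0 : g), u)).2 = 0 ∧
        ∀ v : V, ω (((Jw ((0 : g), u)).1), (0 : V)) ((0 : g), v) = -(u v)) ∧
      -- J_ω is a complex structure
      (∀ p, Jw (Jw p) = -p) ∧
      -- J_ω is integrable iff ω is closed
      ((∀ p q, Bd p q - Bd (Jw p) (Jw q) + Jw (Bd p (Jw q) + Bd (Jw p) q) = 0) ↔
        (∀ p q r : g × V, ω (B p q) r + ω (B q r) p + ω (B r p) q = 0)) := by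
  intro B Bd
  set φ : g →ₗ[ℝ] Module.Dual ℝ V :=
    ω.compl₁₂ (LinearMap.inl ℝ g V) (LinearMap.inr ℝ g V) with hφdef
  have hφ : ∀ (x : g) (v : V), φ x v = ω (x, 0) (0, v) := fun x v => rfl
  set ψ : V →ₗ[ℝ] Module.Dual ℝ g :=
    ω.compl₁₂ (LinearMap.inr ℝ g V) (LinearMap.inl ℝ g V) with hψdef
  have hψ : ∀ (v : V) (x : g), ψ v x = ω (0, v) (x, 0) := fun v x => rfl
  have hpair : ∀ (x : g) (a : V) (y : g) (b : V),
      ω (x, a) (y, b) = φ x b - φ y a := by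
    intro x a y b
    have h1 : ((x, a) : g × V) = (x, 0) + (0, a) := by simp
    have h2 : ((y, b) : g × V) = (y, 0) + (0, b) := by simp
    rw [h1, h2, map_add]
    simp only [LinearMap.add_apply, map_add]
    rw [hgL, hVL, hskew (0, a) (y, 0)]
    rw [hφ, hφ]
    ring
  have hφinj : Function.Injective φ := by
    rw [injective_iff_map_eq_zero]
    intro x hx
    have hx0 : ((x, 0) : g × V) = 0 := by
      refine hnd (x, 0) fun q => ?_
      obtain ⟨y, b⟩ := q
      rw [hpair]
      simp [hx]
    exact congrArg Prod.fst hx0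
  have hψinj : Function.Injective ψ := by
    rw [injective_iff_map_eq_zero]
    intro v hv
    have hv0 : (((0 : g), v) : g × V) = 0 := by
      refine hnd (0, v) fun q => ?_
      obtain ⟨y, b⟩ := q
      rw [hpair]
      have h := congrFun (congrArg DFunLike.coe hv) y
      simp only [hψ, LinearMap.zero_apply] at h
      rw [hpair] at h
      simp only [map_zero, LinearMap.zero_apply, sub_zero, zero_sub, neg_eq_zero] at h
      simp [h]
    exact congrArg Prod.snd hv0
  have hdim : Module.finrank ℝ g = Module.finrank ℝ (Module.Dual ℝ V) := by
    have h1 : Module.finrank ℝ g ≤ Module.finrank ℝ (Module.Dual ℝ V) :=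
      LinearMap.finrank_le_finrank_of_injective hφinj
    have h2 : Module.finrank ℝ V ≤ Module.finrank ℝ (Module.Dual ℝ g) :=
      LinearMap.finrank_le_finrank_of_injective hψinj
    rw [Subspace.dual_finrank_eq] at h2
    rw [Subspace.dual_finrank_eq] at h1 ⊢
    omega
  set e : g ≃ₗ[ℝ] Module.Dual ℝ V := φ.linearEquivOfInjective hφinj hdim with hedef
  have he : ∀ x : g, e x = φ x := fun x => φ.linearEquivOfInjective_apply hφinj hdim x
  set Jw : (g × Module.Dual ℝ V) →ₗ[ℝ] (g × Module.Dual ℝ V) :=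
    ((-(e.symm : Module.Dual ℝ V →ₗ[ℝ] g)) ∘ₗ LinearMap.snd ℝ g (Module.Dual ℝ V)).prod
      ((e : g →ₗ[ℝ] Module.Dual ℝ V) ∘ₗ LinearMap.fst ℝ g (Module.Dual ℝ V)) with hJdef
  have hJ : ∀ p : g × Module.Dual ℝ V, Jw p = (-(e.symm p.2), e p.1) := fun p => rfl
  refine ⟨Jw, ?_, ?_, ?_, ?_⟩
  · intro x
    rw [hJ]
    exact ⟨by simp, fun v => by simp only; rw [he, hφ]⟩
  · intro u
    rw [hJ]
    refine ⟨by simp, fun v => ?_⟩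
    have h : φ (e.symm u) v = u v := by rw [← he, e.apply_symm_apply]
    rw [← hφ]
    simp only [map_neg, LinearMap.neg_apply]
    rw [h]
  · intro p
    obtain ⟨x, u⟩ := p
    rw [hJ, hJ]
    simp
  · have hiff1 : (∀ p q, Bd p q - Bd (Jw p) (Jw q) + Jw (Bd p (Jw q) + Bd (Jw p) q) = 0) ↔
        (∀ x y : g, e ⁅x, y⁆ = (e x) ∘ₗ ρ y - (e y) ∘ₗ ρ x) := by
      constructor
      · intro hint x y
        have h := hint (x, 0) (y, 0)
        simp only [Bd, hJ] at h
        simp only [map_zero, neg_zero, lie_zero, zero_lie, LinearMap.zero_comp,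
          LinearMap.comp_zero, sub_zero, zero_sub, Prod.mk_add_mk, Prod.mk_sub_mk,
          zero_add, add_zero, Prod.ext_iff, Prod.fst_add, Prod.snd_add] at h
        obtain ⟨h1, _⟩ := h
        simp only [Prod.fst_zero] at h1
        have h1' : ⁅x, y⁆ = e.symm (-e y ∘ₗ ρ x + e x ∘ₗ ρ y) := add_neg_eq_zero.mp h1
        rw [h1', e.apply_symm_apply]
        abel
      · intro hE p q
        obtain ⟨x, u⟩ := p
        obtain ⟨y, w⟩ := q
        have hu : u = e (e.symm u) := (e.apply_symm_apply u).symm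
        have hw : w = e (e.symm w) := (e.apply_symm_apply w).symm
        rw [hu, hw]
        simp only [Bd, hJ, e.symm_apply_apply, Prod.ext_iff, Prod.mk_add_mk, Prod.mk_sub_mk,
          Prod.fst_add, Prod.snd_add, Prod.fst_sub, Prod.snd_sub, Prod.fst_zero, Prod.snd_zero]
        constructor
        · rw [← LinearEquiv.map_eq_zero_iff e]
          simp only [map_sub, map_add, map_neg, e.apply_symm_apply, lie_neg, neg_lie, neg_neg,
            LinearMap.comp_neg, hE]
          abel
        · simp only [lie_neg, neg_lie, map_neg, LinearMap.comp_neg, map_add, hE, neg_neg]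
          abel
    have hiff2 : (∀ p q r : g × V, ω (B p q) r + ω (B q r) p + ω (B r p) q = 0) ↔
        (∀ x y : g, e ⁅x, y⁆ = (e x) ∘ₗ ρ y - (e y) ∘ₗ ρ x) := by
      constructor
      · intro hcl x y
        ext v
        have h := hcl (x, 0) (y, 0) (0, v)
        simp only [B] at h
        rw [hpair, hpair, hpair] at h
        simp only [zero_lie, lie_zero, map_zero, LinearMap.zero_apply, sub_zero, zero_sub,
          map_neg] at h
        simp only [he, LinearMap.sub_apply, LinearMap.coe_comp, Function.comp_apply]
        simp only [neg_neg, hφ] at h ⊢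
        linarith
      · intro hE p q r
        obtain ⟨x, a⟩ := p
        obtain ⟨y, b⟩ := q
        obtain ⟨z, c⟩ := r
        simp only [B]
        rw [hpair, hpair, hpair]
        have E1 := congrFun (congrArg DFunLike.coe (hE x y)) c
        have E2 := congrFun (congrArg DFunLike.coe (hE y z)) a
        have E3 := congrFun (congrArg DFunLike.coe (hE z x)) b
        simp only [he, LinearMap.sub_apply, LinearMap.coe_comp, Function.comp_apply,
          LinearMap.coe_mk] at E1 E2 E3
        simp only [map_sub]
        linarith
    rw [hiff1, hiff2]
end

section
/- Let h = g ⋉_ρ V and let φ : h → (h∨)∨ be the canonical Lie algebra isomorphism induced by the natural identification V ≅ (V*)* (u ↦ u**). If J is a totally real complex structure on h, then φ∘J = J_{ω_J}∘φ; if h is Lagrangian with respect to a symplectic form ω, then φ*(ω_{J_ω}) = ω. In other words, the constructions J ↦ ω_J and ω ↦ J_ω are mutually inverse. -/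
/-- Under the canonical isomorphism `φ : h → (h∨)∨`, `φ(x+u) = x + u**`, the
constructions `J ↦ ω_J` and `ω ↦ J_ω` are mutually inverse: for a totally real
complex structure `J` on `h = g ⋉_ρ V` one has `φ ∘ J = J_{ω_J} ∘ φ`, and for a
Lagrangian symplectic form `ω` on `h` one has `φ*(ω_{J_ω}) = ω`. -/
theorem dualizing_constructions_mutually_inverse
    (g V : Type*) [LieRing g] [LieAlgebra ℝ g] [FiniteDimensional ℝ g]
    [AddCommGroup V] [Module ℝ V] [FiniteDimensional ℝ V]
    (ρ : g →ₗ[ℝ] Module.End ℝ V)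
    (hrep : ∀ x y : g, ρ ⁅x, y⁆ = ρ x * ρ y - ρ y * ρ x) :
    -- φ : g × V → g × (V*)*
    let φ : (g × V) → (g × Module.Dual ℝ (Module.Dual ℝ V)) :=
      fun p => (p.1, Module.Dual.eval ℝ V p.2)
    -- Part 1: φ ∘ J = J_{ω_J} ∘ φ for any totally real J on h
    (∀ J : (g × V) →ₗ[ℝ] (g × V),
      (∀ p : g × V, J (J p) = -p) →
      (∀ x : g, (J (x, (0 : V))).1 = 0) →
      (∀ u : V, (J ((0 : g), u)).2 = 0) →
      -- ω_J on h∨ = g × V*:  ω_J(x+u, y+v) = v(Jx) − u(Jy)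
      let ωJ : (g × Module.Dual ℝ V) → (g × Module.Dual ℝ V) → ℝ :=
        fun p q => q.2 ((J (p.1, (0 : V))).2) - p.2 ((J (q.1, (0 : V))).2)
      -- any J_{ω_J} on (h∨)∨ satisfying the defining formulas
      ∀ Jw : (g × Module.Dual ℝ (Module.Dual ℝ V)) →ₗ[ℝ]
              (g × Module.Dual ℝ (Module.Dual ℝ V)),
        (∀ x : g, (Jw (x, (0 : Module.Dual ℝ (Module.Dual ℝ V)))).1 = 0 ∧
          ∀ u : Module.Dual ℝ V,
            (Jw (x, (0 : Module.Dual ℝ (Module.Dual ℝ V)))).2 u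
              = ωJ (x, (0 : Module.Dual ℝ V)) ((0 : g), u)) →
        (∀ F : Module.Dual ℝ (Module.Dual ℝ V),
          (Jw ((0 : g), F)).2 = 0 ∧
          ∀ u : Module.Dual ℝ V,
            ωJ (((Jw ((0 : g), F)).1), (0 : Module.Dual ℝ V)) ((0 : g), u)
              = -(F u)) →
        ∀ p : g × V, Jw (φ p) = φ (J p)) ∧
    -- Part 2: φ*(ω_{J_ω}) = ω for any Lagrangian symplectic ω on h
    (∀ ω : (g × V) →ₗ[ℝ] (g × V) →ₗ[ℝ] ℝ,
      (∀ p q : g × V, ω p q = -ω q p) →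
      (∀ p : g × V, (∀ q, ω p q = 0) → p = 0) →
      (∀ x y : g, ω (x, (0 : V)) (y, (0 : V)) = 0) →
      (∀ u v : V, ω ((0 : g), u) ((0 : g), v) = 0) →
      (∀ p q r : g × V,
        ω ((⁅p.1, q.1⁆, ρ p.1 q.2 - ρ q.1 p.2) : g × V) r
          + ω (⁅q.1, r.1⁆, ρ q.1 r.2 - ρ r.1 q.2) p
          + ω (⁅r.1, p.1⁆, ρ r.1 p.2 - ρ p.1 r.2) q = 0) →
      -- any J_ω on h∨ satisfying the defining formulas
      ∀ Jw : (g × Module.Dual ℝ V) →ₗ[ℝ] (g × Module.Dual ℝ V),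
        (∀ x : g, (Jw (x, (0 : Module.Dual ℝ V))).1 = 0 ∧
          ∀ v : V, (Jw (x, (0 : Module.Dual ℝ V))).2 v = ω (x, (0 : V)) ((0 : g), v)) →
        (∀ u : Module.Dual ℝ V, (Jw ((0 : g), u)).2 = 0 ∧
          ∀ v : V, ω (((Jw ((0 : g), u)).1), (0 : V)) ((0 : g), v) = -(u v)) →
        -- ω_{J_ω}(x+u**, y+v**) = v**(J_ω x) − u**(J_ω y) pulled back along φ is ω
        ∀ p q : g × V,
          (φ q).2 ((Jw ((p.1 : g), (0 : Module.Dual ℝ V))).2)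
            - (φ p).2 ((Jw ((q.1 : g), (0 : Module.Dual ℝ V))).2)
          = ω p q) := by

  intro φ
  constructor
  · intro J hJJ hJg hJV ωJ Jw hJw1 hJw2 p
    obtain ⟨x, u⟩ := p
    have hsplit : ((x, u) : g × V) = (x, 0) + (0, u) := by simp
    have hsplit' : ((x, Module.Dual.eval ℝ V u) : g × Module.Dual ℝ (Module.Dual ℝ V))
        = (x, 0) + (0, Module.Dual.eval ℝ V u) := by simp
    set x' : g := (Jw ((0 : g), Module.Dual.eval ℝ V u)).1 with hx'
    -- second component of J(x',0) is -u
    have key : (J (x', (0 : V))).2 = -u := by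
      have hz : (J (x', (0 : V))).2 + u = 0 := by
        rw [← Module.forall_dual_apply_eq_zero_iff ℝ]
        intro u'
        have h2 := (hJw2 (Module.Dual.eval ℝ V u)).2 u'
        rw [← hx'] at h2
        simp only [ωJ, Module.Dual.eval_apply, LinearMap.zero_apply, sub_zero] at h2
        rw [map_add, h2]
        ring
      exact eq_neg_of_add_eq_zero_left hz
    have hJ2 : J (x', (0 : V)) = ((0 : g), -u) := Prod.ext (hJg x') key
    have hJu : J ((0 : g), u) = (x', (0 : V)) := by
      have h := hJJ (x', (0 : V))
      rw [hJ2, show (((0 : g), -u) : g × V) = -((0 : g), u) by simp, map_neg] at h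
      exact neg_inj.mp h
    show Jw (x, Module.Dual.eval ℝ V u) = φ (J (x, u))
    rw [hsplit', map_add, hsplit, map_add]
    refine Prod.ext ?_ ?_
    · simp only [φ, Prod.fst_add, (hJw1 x).1, hJg x, hJu, ← hx', zero_add]
    · simp only [φ, Prod.snd_add, (hJw2 (Module.Dual.eval ℝ V u)).1, hJV u, add_zero]
      ext u'
      have h3 := (hJw1 x).2 u'
      simp only [ωJ, LinearMap.zero_apply, sub_zero] at h3
      simpa [Module.Dual.eval_apply] using h3

  · intro ω hanti hnd hg hV hclosed Jw hJw1 hJw2 p q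
    obtain ⟨x, u⟩ := p
    obtain ⟨y, v⟩ := q
    have h1 := (hJw1 x).2 v
    have h2 := (hJw1 y).2 u
    simp only [Module.Dual.eval_apply, φ] at *
    rw [h1, h2]
    have hx : ((x, u) : g × V) = (x, 0) + (0, u) := by simp
    have hy : ((y, v) : g × V) = (y, 0) + (0, v) := by simp
    rw [hx, hy]
    simp only [map_add, LinearMap.add_apply]
    rw [hg x y, hV u v, hanti ((0 : g), u) ((y, (0 : V)) : g × V)]
    ring
end

section
/- Let (ω, J) be a special Lagrangian pseudo-Kähler structure on a semi-direct product h = g ⋉_ρ V, with induced metric g(ξ,η) = ω(ξ,Jη). Then γ(x) := −Jρ(x)J is a flat torsion-free connection on g and its metric adjoint dual −γᵗ (defined by g(γᵗ(x)y, z) = g(y, γ(x)z)) is also a flat torsion-free connection on g. -/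
/-- For a special Lagrangian pseudo-Kähler structure `(ω, J)` on a semi-direct
product `h = g ⋉_ρ V`, the connection `γ(x) = −Jρ(x)J = −J⁅x, J·⁆` on `g` is
flat and torsion-free, and its metric adjoint dual `−γᵗ` (with
`g(γᵗ(x)y, z) = g(y, γ(x)z)` for the induced metric `g(ξ,η) = ω(ξ,Jη)`) is
also a flat torsion-free connection on `g`. -/
theorem specialLagrangian_dual_connection_flat_torsionFree
    (h : Type*) [LieRing h] [LieAlgebra ℝ h]
    (g V : Submodule ℝ h)
    (hsub : ∀ x ∈ g, ∀ y ∈ g, ⁅x, y⁆ ∈ g)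
    (hideal : ∀ x : h, ∀ v ∈ V, ⁅x, v⁆ ∈ V)
    (habelian : ∀ u ∈ V, ∀ v ∈ V, ⁅u, v⁆ = (0 : h))
    (hcompl : IsCompl g V)
    (J : h →ₗ[ℝ] h) (hJ : ∀ x : h, J (J x) = -x)
    (hJg : ∀ x ∈ g, J x ∈ V)
    (hint : ∀ x y : h, ⁅x, y⁆ - ⁅J x, J y⁆ + J (⁅x, J y⁆ + ⁅J x, y⁆) = 0)
    (ω : h →ₗ[ℝ] h →ₗ[ℝ] ℝ)
    (hskew : ∀ x y : h, ω x y = -ω y x)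
    (hnd : ∀ x : h, (∀ y, ω x y = 0) → x = 0)
    (hclosed : ∀ x y z : h, ω ⁅x, y⁆ z + ω ⁅y, z⁆ x + ω ⁅z, x⁆ y = 0)
    (hgL : ∀ x ∈ g, ∀ y ∈ g, ω x y = 0)
    (hVL : ∀ u ∈ V, ∀ v ∈ V, ω u v = 0)
    (hcompat : ∀ x y : h, ω (J x) (J y) = ω x y) :
    -- γ(x)y := −J⁅x, Jy⁆ is a flat torsion-free connection on g ...
    ((∀ x ∈ g, ∀ y ∈ g, ⁅x, y⁆ = -J ⁅x, J y⁆ + J ⁅y, J x⁆) ∧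
     (∀ x ∈ g, ∀ y ∈ g, ∀ z ∈ g,
       -J ⁅⁅x, y⁆, J z⁆ =
         -J ⁅x, J (-J ⁅y, J z⁆)⁆ + J ⁅y, J (-J ⁅x, J z⁆)⁆)) ∧
    -- ... and so is −γᵗ, for any γᵗ g-valued on g satisfying the adjoint property
    (∀ γt : h → h → h,
      (∀ x ∈ g, ∀ y ∈ g, γt x y ∈ g) →
      (∀ x ∈ g, ∀ y ∈ g, ∀ z ∈ g,
        ω (γt x y) (J z) = ω y (J (-J ⁅x, J z⁆))) →
      -- torsion-free : [x,y] = (−γᵗ)(x)y − (−γᵗ)(y)x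
      (∀ x ∈ g, ∀ y ∈ g, ⁅x, y⁆ = -γt x y + γt y x) ∧
      -- flat : (−γᵗ)([x,y]) = (−γᵗ)(x)(−γᵗ)(y) − (−γᵗ)(y)(−γᵗ)(x)
      (∀ x ∈ g, ∀ y ∈ g, ∀ z ∈ g,
        -γt ⁅x, y⁆ z = γt x (γt y z) - γt y (γt x z))) := by

  have hJne : ∀ v : h, J (-J v) = v := fun v => by rw [map_neg, hJ, neg_neg]
  -- J maps V into g
  have hJV : ∀ v ∈ V, J v ∈ g := by
    intro v hv
    obtain ⟨a, ha, b, hb, hab⟩ := Submodule.mem_sup.mp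
      (show J v ∈ g ⊔ V by rw [hcompl.sup_eq_top]; trivial)
    have hJb : J b ∈ V := by
      have h1 : J a + J b = -v := by rw [← map_add, hab, hJ]
      have h2 : J b = -v - J a := by rw [eq_sub_iff_add_eq, add_comm]; exact h1
      rw [h2]
      exact Submodule.sub_mem _ (Submodule.neg_mem _ hv) (hJg a ha)
    have hb0 : b = 0 := by
      apply hnd
      intro y
      obtain ⟨c, hc, d, hd, hcd⟩ := Submodule.mem_sup.mp
        (show y ∈ g ⊔ V by rw [hcompl.sup_eq_top]; trivial)
      have h1 : ω b c = 0 := by rw [← hcompat]; exact hVL _ hJb _ (hJg c hc)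
      have h2 : ω b d = 0 := hVL b hb d hd
      rw [← hcd, map_add, h1, h2, add_zero]
    rw [← hab, hb0, add_zero]; exact ha
  -- non-degeneracy of the pairing (a, z) ↦ ω a (J z) on g
  have hndg : ∀ a ∈ g, (∀ z ∈ g, ω a (J z) = 0) → a = 0 := by
    intro a ha h0
    apply hnd
    intro y
    obtain ⟨c, hc, d, hd, hcd⟩ := Submodule.mem_sup.mp
      (show y ∈ g ⊔ V by rw [hcompl.sup_eq_top]; trivial)
    have h1 : ω a c = 0 := hgL a ha c hc
    have h2 : ω a d = 0 := by
      have := h0 (-J d) (Submodule.neg_mem _ (hJV d hd))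
      rwa [hJne] at this
    rw [← hcd, map_add, h1, h2, add_zero]
  have heqg : ∀ a ∈ g, ∀ b ∈ g, (∀ z ∈ g, ω a (J z) = ω b (J z)) → a = b := by
    intro a ha b hb hz
    have : a - b = 0 := by
      apply hndg _ (Submodule.sub_mem _ ha hb)
      intro z hzg
      have := hz z hzg
      simp only [map_sub, LinearMap.sub_apply]
      rw [this, sub_self]
    exact sub_eq_zero.mp this
  -- moment map identity from closedness
  have hmoment : ∀ x y z : h, ω ⁅x, y⁆ z = ω x ⁅y, z⁆ - ω y ⁅x, z⁆ := by
    intro x y z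
    have hcl := hclosed x y z
    have h1 := hskew ⁅y, z⁆ x
    have h4 : ω ⁅z, x⁆ y = ω y ⁅x, z⁆ := by
      rw [hskew, ← lie_skew x z, map_neg]
    linarith [hcl, h1, h4]
  refine ⟨⟨?_, ?_⟩, ?_⟩
  · -- torsion-free for γ
    intro x hx y hy
    have hab : (⁅J x, J y⁆ : h) = 0 := habelian _ (hJg x hx) _ (hJg y hy)
    have hi := hint x y
    rw [hab, sub_zero, map_add] at hi
    rw [← lie_skew y (J x), map_neg, eq_neg_of_add_eq_zero_left hi, neg_add]
  · -- flat for γ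
    intro x hx y hy z hz
    rw [hJne, hJne, lie_lie, map_sub]
    abel
  · -- dual connection
    intro γt hγmem hadj
    have hadj' : ∀ x ∈ g, ∀ y ∈ g, ∀ z ∈ g, ω (γt x y) (J z) = ω y ⁅x, J z⁆ := by
      intro x hx y hy z hz
      rw [hadj x hx y hy z hz, hJne]
    constructor
    · intro x hx y hy
      refine heqg _ (hsub x hx y hy) _
        (Submodule.add_mem _ (Submodule.neg_mem _ (hγmem x hx y hy)) (hγmem y hy x hx)) ?_
      intro z hz
      have h1 := hadj' x hx y hy z hz
      have h2 := hadj' y hy x hx z hz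
      have h3 := hmoment x y (J z)
      simp only [map_add, map_neg, LinearMap.add_apply, LinearMap.neg_apply]
      linarith [h1, h2, h3]
    · intro x hx y hy z hz
      have hxy := hsub x hx y hy
      have hmemxw : ∀ a ∈ g, ∀ w ∈ g, -J ⁅a, J w⁆ ∈ g := fun a ha w hw =>
        Submodule.neg_mem _ (hJV _ (hideal a (J w) (hJg w hw)))
      refine heqg _ (Submodule.neg_mem _ (hγmem _ hxy z hz)) _
        (Submodule.sub_mem _ (hγmem x hx _ (hγmem y hy z hz))
          (hγmem y hy _ (hγmem x hx z hz))) ?_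
      intro w hw
      have e1 : ω (γt ⁅x, y⁆ z) (J w) = ω z ⁅⁅x, y⁆, J w⁆ := hadj' _ hxy z hz w hw
      have e2 : ω (γt x (γt y z)) (J w) = ω z ⁅y, ⁅x, J w⁆⁆ := by
        have s1 := hadj' x hx _ (hγmem y hy z hz) w hw
        have s2 := hadj' y hy z hz _ (hmemxw x hx w hw)
        rw [hJne] at s2
        rw [s1, s2]
      have e3 : ω (γt y (γt x z)) (J w) = ω z ⁅x, ⁅y, J w⁆⁆ := by
        have s1 := hadj' y hy _ (hγmem x hx z hz) w hw
        have s2 := hadj' x hx z hz _ (hmemxw y hy w hw)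
        rw [hJne] at s2
        rw [s1, s2]
      simp only [map_neg, map_sub, LinearMap.neg_apply, LinearMap.sub_apply]
      rw [e1, e2, e3, lie_lie, map_sub, neg_sub]
end

section
/- On the 6-dimensional vector space h with fixed basis e₁,…,e₆, complex structure J e_{2j−1} = e_{2j}, symplectic candidate ω = e¹⁶ − e²⁵ + e³⁴, and the family of Lie brackets with structure equations (0,0,0, a·12, b·13, c·14 + d·23) (i.e. de⁴ = a e¹∧e², de⁵ = b e¹∧e³, de⁶ = c e¹∧e⁴ + d e²∧e³), the form ω is closed if and only if a + b + d = 0, and J is integrable if and only if b − c − d = 0. Hence for every (a,b) ∈ ℝ², the bracket (0,0,0, a·12, b·13, (a+2b)·14 − (a+b)·23) gives a Lie algebra on which (J, ω) is a special Lagrangian pseudo-Kähler structure. -/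
private lemma cons_val_five {α : Type*} (x : α) (u : Fin 5 → α) :
    Matrix.vecCons x u 5 = u 4 := rfl

private lemma fin6_mk0 (h : 0 < 6) : (⟨0, h⟩ : Fin 6) = 0 := rfl
private lemma fin6_mk1 (h : 1 < 6) : (⟨1, h⟩ : Fin 6) = 1 := rfl
private lemma fin6_mk2 (h : 2 < 6) : (⟨2, h⟩ : Fin 6) = 2 := rfl
private lemma fin6_mk3 (h : 3 < 6) : (⟨3, h⟩ : Fin 6) = 3 := rfl
private lemma fin6_mk4 (h : 4 < 6) : (⟨4, h⟩ : Fin 6) = 4 := rfl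
private lemma fin6_mk5 (h : 5 < 6) : (⟨5, h⟩ : Fin 6) = 5 := rfl


/-- On ℝ⁶ with the family of nilpotent brackets `(0,0,0, a·12, b·13, c·14 + d·23)`,
the fixed complex structure `J e_{2j−1} = e_{2j}` and the 2-form
`ω = e¹⁶ − e²⁵ + e³⁴`:  `ω` is closed iff `a + b + d = 0`, `J` is integrable
iff `b − c − d = 0`; hence for every `(a,b)` the choice `c = a + 2b`,
`d = −(a+b)` gives a special Lagrangian pseudo-Kähler structure `(J, ω)`. -/
theorem family_special_lagrangian_pseudoKahler (a b c d : ℝ) :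
    -- bracket: [e₁,e₂] = −a e₄, [e₁,e₃] = −b e₅, [e₁,e₄] = −c e₆, [e₂,e₃] = −d e₆
    let br : (Fin 6 → ℝ) → (Fin 6 → ℝ) → (Fin 6 → ℝ) := fun u v =>
      ![0, 0, 0,
        -a * (u 0 * v 1 - u 1 * v 0),
        -b * (u 0 * v 2 - u 2 * v 0),
        -c * (u 0 * v 3 - u 3 * v 0) - d * (u 1 * v 2 - u 2 * v 1)]
    -- J e_{2j-1} = e_{2j}
    let Jm : (Fin 6 → ℝ) → (Fin 6 → ℝ) := fun u =>
      ![-u 1, u 0, -u 3, u 2, -u 5, u 4]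
    -- ω = e¹∧e⁶ − e²∧e⁵ + e³∧e⁴
    let ω : (Fin 6 → ℝ) → (Fin 6 → ℝ) → ℝ := fun u v =>
      (u 0 * v 5 - u 5 * v 0) - (u 1 * v 4 - u 4 * v 1) + (u 2 * v 3 - u 3 * v 2)
    -- ω closed iff a + b + d = 0
    ((∀ u v w, ω (br u v) w + ω (br v w) u + ω (br w u) v = 0) ↔ a + b + d = 0) ∧
    -- J integrable iff b − c − d = 0
    ((∀ u v, br u v - br (Jm u) (Jm v) + Jm (br u (Jm v) + br (Jm u) v) = 0) ↔
      b - c - d = 0) ∧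
    -- hence (J, ω) is special Lagrangian pseudo-Kähler for c = a+2b, d = −(a+b)
    ((c = a + 2 * b ∧ d = -(a + b)) →
      (∀ u v w, ω (br u v) w + ω (br v w) u + ω (br w u) v = 0) ∧
      (∀ u v, br u v - br (Jm u) (Jm v) + Jm (br u (Jm v) + br (Jm u) v) = 0) ∧
      (∀ u v, ω (Jm u) (Jm v) = ω u v) ∧
      (∀ u, (∀ v, ω u v = 0) → u = 0)) := by
  intro br Jm ω
  have closed_of : a + b + d = 0 →
      ∀ u v w, ω (br u v) w + ω (br v w) u + ω (br w u) v = 0 := by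
    intro h u v w
    have hd : d = -a - b := by linarith
    subst hd
    simp only [br, ω, Fin.isValue, Matrix.cons_val_zero, Matrix.cons_val_one,
      Matrix.cons_val_two, Matrix.cons_val_three, Matrix.cons_val_four, cons_val_five,
      Nat.succ_eq_add_one, Nat.reduceAdd, Matrix.tail_cons, Matrix.head_cons]
    ring
  have integ_of : b - c - d = 0 →
      ∀ u v, br u v - br (Jm u) (Jm v) + Jm (br u (Jm v) + br (Jm u) v) = 0 := by
    intro h u v
    have hc : c = b - d := by linarith
    subst hc
    funext i
    fin_cases i <;>
      simp only [br, Jm, Pi.add_apply, Pi.sub_apply, Pi.zero_apply,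
        fin6_mk0, fin6_mk1, fin6_mk2, fin6_mk3, fin6_mk4, fin6_mk5,
        Fin.isValue, Matrix.cons_val_zero, Matrix.cons_val_one,
      Matrix.cons_val_two, Matrix.cons_val_three, Matrix.cons_val_four, cons_val_five,
      Nat.succ_eq_add_one, Nat.reduceAdd, Matrix.tail_cons, Matrix.head_cons] <;>
      ring
  refine ⟨⟨fun h => ?_, closed_of⟩, ⟨fun h => ?_, integ_of⟩, fun ⟨hc, hd⟩ => ?_⟩
  · have := h ![1,0,0,0,0,0] ![0,1,0,0,0,0] ![0,0,1,0,0,0]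
    simp only [br, ω, Fin.isValue, Matrix.cons_val_zero, Matrix.cons_val_one,
      Matrix.cons_val_two, Matrix.cons_val_three, Matrix.cons_val_four, cons_val_five,
      Nat.succ_eq_add_one, Nat.reduceAdd, Matrix.tail_cons, Matrix.head_cons] at this
    linarith
  · have := congrFun (h ![1,0,0,0,0,0] ![0,0,1,0,0,0]) 4
    simp only [br, Jm, Pi.add_apply, Pi.sub_apply, Pi.zero_apply,
      Fin.isValue, Matrix.cons_val_zero, Matrix.cons_val_one,
      Matrix.cons_val_two, Matrix.cons_val_three, Matrix.cons_val_four, cons_val_five,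
      Nat.succ_eq_add_one, Nat.reduceAdd, Matrix.tail_cons, Matrix.head_cons] at this
    linarith
  · refine ⟨closed_of (by linarith), integ_of (by linarith), ?_, ?_⟩
    · intro u v
      simp only [Jm, ω, Fin.isValue, Matrix.cons_val_zero, Matrix.cons_val_one,
      Matrix.cons_val_two, Matrix.cons_val_three, Matrix.cons_val_four, cons_val_five,
      Nat.succ_eq_add_one, Nat.reduceAdd, Matrix.tail_cons, Matrix.head_cons]
      ring
    · intro u hu
      have h0 := hu ![0,0,0,0,0,1]
      have h1 := hu ![0,0,0,0,1,0]
      have h2 := hu ![0,0,0,1,0,0]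
      have h3 := hu ![0,0,1,0,0,0]
      have h4 := hu ![0,1,0,0,0,0]
      have h5 := hu ![1,0,0,0,0,0]
      simp only [ω, Fin.isValue, Matrix.cons_val_zero, Matrix.cons_val_one,
      Matrix.cons_val_two, Matrix.cons_val_three, Matrix.cons_val_four, cons_val_five,
      Nat.succ_eq_add_one, Nat.reduceAdd, Matrix.tail_cons, Matrix.head_cons] at h0 h1 h2 h3 h4 h5
      funext i
      fin_cases i <;> simp <;> linarith
end

section
/- The 6-dimensional nilpotent Lie algebra h₆ with structure equations (0,0,0,12,13,0) (i.e. [e₁,e₂] = −e₄, [e₁,e₃] = −e₅, all other brackets of basis vectors zero) admits no pseudo-Kähler pair (J, ω) in which J is a complex structure totally real with respect to the splitting g = ⟨e₁,e₃,e₅⟩, V = ⟨e₂,e₄,e₆⟩, and ω is a compatible symplectic form for which g and V are Lagrangian. (Any such compatible closed ω is forced to be degenerate.) -/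
private lemma vec6_four {α : Type*} (a b c d e f : α) : ![a,b,c,d,e,f] 4 = e := rfl
private lemma vec6_five {α : Type*} (a b c d e f : α) : ![a,b,c,d,e,f] 5 = f := rfl

/-- The 6-dimensional nilpotent Lie algebra `h₆ = (0,0,0,12,13,0)`
(`[e₁,e₂] = −e₄`, `[e₁,e₃] = −e₅`) admits no pseudo-Kähler pair `(J, ω)` with
`J` totally real with respect to the splitting `g = ⟨e₁,e₃,e₅⟩`,
`V = ⟨e₂,e₄,e₆⟩`, and `ω` a compatible symplectic form making `g`, `V`
Lagrangian. (Coordinates: `e_i` is the standard basis vector of index `i−1`;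
`g` is the set of vectors with coordinates 1, 3, 5 zero; `V` those with
coordinates 0, 2, 4 zero.) -/
theorem h6_no_special_lagrangian_pseudoKahler :
    ¬ ∃ (J : (Fin 6 → ℝ) →ₗ[ℝ] (Fin 6 → ℝ))
        (ω : (Fin 6 → ℝ) →ₗ[ℝ] (Fin 6 → ℝ) →ₗ[ℝ] ℝ),
      (let br : (Fin 6 → ℝ) → (Fin 6 → ℝ) → (Fin 6 → ℝ) := fun u v =>
        ![0, 0, 0,
          -(u 0 * v 1 - u 1 * v 0),
          -(u 0 * v 2 - u 2 * v 0),
          0]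
      -- J is a complex structure
      (∀ u, J (J u) = -u) ∧
      -- totally real: J g ⊆ V and J V ⊆ g
      (∀ u : Fin 6 → ℝ, (u 1 = 0 ∧ u 3 = 0 ∧ u 5 = 0) →
        ((J u) 0 = 0 ∧ (J u) 2 = 0 ∧ (J u) 4 = 0)) ∧
      (∀ u : Fin 6 → ℝ, (u 0 = 0 ∧ u 2 = 0 ∧ u 4 = 0) →
        ((J u) 1 = 0 ∧ (J u) 3 = 0 ∧ (J u) 5 = 0)) ∧
      -- J is integrable
      (∀ u v, br u v - br (J u) (J v) + J (br u (J v) + br (J u) v) = 0) ∧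
      -- ω is skew, non-degenerate and closed (symplectic)
      (∀ u v, ω u v = -ω v u) ∧
      (∀ u, (∀ v, ω u v = 0) → u = 0) ∧
      (∀ u v w, ω (br u v) w + ω (br v w) u + ω (br w u) v = 0) ∧
      -- compatibility (ω of type (1,1))
      (∀ u v, ω (J u) (J v) = ω u v) ∧
      -- g and V are Lagrangian
      (∀ u v : Fin 6 → ℝ, (u 1 = 0 ∧ u 3 = 0 ∧ u 5 = 0) →
        (v 1 = 0 ∧ v 3 = 0 ∧ v 5 = 0) → ω u v = 0) ∧
      (∀ u v : Fin 6 → ℝ, (u 0 = 0 ∧ u 2 = 0 ∧ u 4 = 0) →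
        (v 0 = 0 ∧ v 2 = 0 ∧ v 4 = 0) → ω u v = 0)) := by
  rintro ⟨J, ω, hJ2, hgV, hVg, hint, hskew, hnd, hcl, hcomp, hLg, hLV⟩
  set e : Fin 6 → (Fin 6 → ℝ) := fun k i => if i = k then (1:ℝ) else 0 with he
  -- components of e
  have hdecomp : ∀ v : Fin 6 → ℝ,
      v = v 0 • e 0 + v 1 • e 1 + v 2 • e 2 + v 3 • e 3 + v 4 • e 4 + v 5 • e 5 := by
    intro v; funext i; fin_cases i <;> simp [he, vec6_four, vec6_five]
  -- e 0, e 2, e 4 are in g; e 1, e 3, e 5 in V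
  have hg0 : (e 0) 1 = 0 ∧ (e 0) 3 = 0 ∧ (e 0) 5 = 0 := by simp [he]
  have hg2 : (e 2) 1 = 0 ∧ (e 2) 3 = 0 ∧ (e 2) 5 = 0 := by simp [he]
  have hg4 : (e 4) 1 = 0 ∧ (e 4) 3 = 0 ∧ (e 4) 5 = 0 := by simp [he]
  have hV3 : (e 3) 0 = 0 ∧ (e 3) 2 = 0 ∧ (e 3) 4 = 0 := by simp [he]
  -- totally real data
  obtain ⟨hJ00, hJ02, hJ04⟩ := hgV (e 0) hg0
  obtain ⟨hJ20, hJ22, hJ24⟩ := hgV (e 2) hg2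
  obtain ⟨hJ31, hJ33, hJ35⟩ := hVg (e 3) hV3
  -- b = coefficient of e1 in J e2
  set b : ℝ := J (e 2) 1 with hb
  -- Integrability at (e0, e2) gives b • J (e 3) = - e 4
  have key : b • J (e 3) = - e 4 := by
    have h := hint (e 0) (e 2)
    have h1 : (fun u v : Fin 6 → ℝ =>
        ![0, 0, 0, -(u 0 * v 1 - u 1 * v 0), -(u 0 * v 2 - u 2 * v 0), (0:ℝ)])
        (e 0) (e 2) = - e 4 := by
      funext i; fin_cases i <;> simp [he, vec6_four, vec6_five]
    have h2 : (fun u v : Fin 6 → ℝ =>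
        ![0, 0, 0, -(u 0 * v 1 - u 1 * v 0), -(u 0 * v 2 - u 2 * v 0), (0:ℝ)])
        (J (e 0)) (J (e 2)) = 0 := by
      funext i; fin_cases i <;> simp [vec6_four, vec6_five, hJ00, hJ20, hJ02, hJ22]
    have h3 : (fun u v : Fin 6 → ℝ =>
        ![0, 0, 0, -(u 0 * v 1 - u 1 * v 0), -(u 0 * v 2 - u 2 * v 0), (0:ℝ)])
        (e 0) (J (e 2)) = (-b) • e 3 := by
      funext i; fin_cases i <;> simp [he, vec6_four, vec6_five, hJ20, hJ22, hb]
      simpa [he] using hJ22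
    have h4 : (fun u v : Fin 6 → ℝ =>
        ![0, 0, 0, -(u 0 * v 1 - u 1 * v 0), -(u 0 * v 2 - u 2 * v 0), (0:ℝ)])
        (J (e 0)) (e 2) = 0 := by
      funext i; fin_cases i <;> simp [he, vec6_four, vec6_five, hJ00, hJ02]
      simpa [he] using hJ00
    rw [h1, h2, h3, h4] at h
    rw [add_zero, sub_zero, map_smul] at h
    funext i
    have hi := congrFun h i
    simp only [Pi.add_apply, Pi.neg_apply, Pi.smul_apply, Pi.zero_apply,
      smul_eq_mul] at hi ⊢
    linarith
  -- b ≠ 0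
  have hbne : b ≠ 0 := by
    intro h0
    have := congrFun key 4
    rw [h0] at this
    simp [he] at this
  -- J e4 = b • e3
  have hJ4 : J (e 4) = b • e 3 := by
    have := congrArg J key
    rw [map_smul, hJ2, map_neg] at this
    funext i
    have hi := congrFun this i
    simp only [Pi.add_apply, Pi.neg_apply, Pi.smul_apply, Pi.zero_apply,
      smul_eq_mul] at hi ⊢
    linarith
  -- closedness facts
  -- ω e3 e4 = 0
  have hc1 : ω (e 3) (e 4) = 0 := by
    have h := hcl (e 0) (e 1) (e 4)
    have h1 : (fun u v : Fin 6 → ℝ =>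
        ![0, 0, 0, -(u 0 * v 1 - u 1 * v 0), -(u 0 * v 2 - u 2 * v 0), (0:ℝ)])
        (e 0) (e 1) = - e 3 := by funext i; fin_cases i <;> simp [he, vec6_four, vec6_five]
    have h2 : (fun u v : Fin 6 → ℝ =>
        ![0, 0, 0, -(u 0 * v 1 - u 1 * v 0), -(u 0 * v 2 - u 2 * v 0), (0:ℝ)])
        (e 1) (e 4) = 0 := by funext i; fin_cases i <;> simp [he, vec6_four, vec6_five]
    have h3 : (fun u v : Fin 6 → ℝ =>
        ![0, 0, 0, -(u 0 * v 1 - u 1 * v 0), -(u 0 * v 2 - u 2 * v 0), (0:ℝ)])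
        (e 4) (e 0) = 0 := by funext i; fin_cases i <;> simp [he, vec6_four, vec6_five]
    rw [h1, h2, h3] at h
    simp only [map_zero, map_neg, LinearMap.zero_apply, LinearMap.neg_apply,
      add_zero] at h
    linarith
  -- ω e4 e5 = 0
  have hc2 : ω (e 4) (e 5) = 0 := by
    have h := hcl (e 0) (e 2) (e 5)
    have h1 : (fun u v : Fin 6 → ℝ =>
        ![0, 0, 0, -(u 0 * v 1 - u 1 * v 0), -(u 0 * v 2 - u 2 * v 0), (0:ℝ)])
        (e 0) (e 2) = - e 4 := by funext i; fin_cases i <;> simp [he, vec6_four, vec6_five]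
    have h2 : (fun u v : Fin 6 → ℝ =>
        ![0, 0, 0, -(u 0 * v 1 - u 1 * v 0), -(u 0 * v 2 - u 2 * v 0), (0:ℝ)])
        (e 2) (e 5) = 0 := by funext i; fin_cases i <;> simp [he, vec6_four, vec6_five]
    have h3 : (fun u v : Fin 6 → ℝ =>
        ![0, 0, 0, -(u 0 * v 1 - u 1 * v 0), -(u 0 * v 2 - u 2 * v 0), (0:ℝ)])
        (e 5) (e 0) = 0 := by funext i; fin_cases i <;> simp [he, vec6_four, vec6_five]
    rw [h1, h2, h3] at h
    simp only [map_zero, map_neg, LinearMap.zero_apply, LinearMap.neg_apply,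
      add_zero] at h
    linarith
  -- ω e4 e1 = ω e3 e2
  have hc3 : ω (e 4) (e 1) = ω (e 3) (e 2) := by
    have h := hcl (e 0) (e 1) (e 2)
    have h1 : (fun u v : Fin 6 → ℝ =>
        ![0, 0, 0, -(u 0 * v 1 - u 1 * v 0), -(u 0 * v 2 - u 2 * v 0), (0:ℝ)])
        (e 0) (e 1) = - e 3 := by funext i; fin_cases i <;> simp [he, vec6_four, vec6_five]
    have h2 : (fun u v : Fin 6 → ℝ =>
        ![0, 0, 0, -(u 0 * v 1 - u 1 * v 0), -(u 0 * v 2 - u 2 * v 0), (0:ℝ)])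
        (e 1) (e 2) = 0 := by funext i; fin_cases i <;> simp [he, vec6_four, vec6_five]
    have h3 : (fun u v : Fin 6 → ℝ =>
        ![0, 0, 0, -(u 0 * v 1 - u 1 * v 0), -(u 0 * v 2 - u 2 * v 0), (0:ℝ)])
        (e 2) (e 0) = e 4 := by funext i; fin_cases i <;> simp [he, vec6_four, vec6_five]
    rw [h1, h2, h3] at h
    simp only [map_zero, map_neg, LinearMap.zero_apply, LinearMap.neg_apply,
      add_zero] at h
    linarith
  -- Lagrangian facts for g
  have hL40 : ω (e 4) (e 0) = 0 := hLg (e 4) (e 0) hg4 hg0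
  have hL42 : ω (e 4) (e 2) = 0 := hLg (e 4) (e 2) hg4 hg2
  have hL44 : ω (e 4) (e 4) = 0 := hLg (e 4) (e 4) hg4 hg4
  -- ω e4 applied to any V-vector v equals v 1 * ω e4 e1
  have hexp : ∀ v : Fin 6 → ℝ, ω (e 4) v
      = v 0 * ω (e 4) (e 0) + v 1 * ω (e 4) (e 1) + v 2 * ω (e 4) (e 2)
      + v 3 * ω (e 4) (e 3) + v 4 * ω (e 4) (e 4) + v 5 * ω (e 4) (e 5) := by
    intro v
    conv_lhs => rw [hdecomp v]
    simp only [map_add, map_smul, LinearMap.add_apply, LinearMap.smul_apply,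
      smul_eq_mul]
  -- compatibility: ω e3 e2 = -(ω e4 e1)
  have hc4 : b * ω (e 3) (e 2) = - (b * ω (e 4) (e 1)) := by
    have h1 : ω (e 3) (e 2) = ω (J (e 3)) (J (e 2)) := (hcomp (e 3) (e 2)).symm
    have h2 : b * ω (e 3) (e 2) = ω (b • J (e 3)) (J (e 2)) := by
      rw [map_smul]; simp [h1]
    rw [key] at h2
    have h3 : ω (-(e 4)) (J (e 2)) = - ω (e 4) (J (e 2)) := by simp
    rw [h3] at h2
    have h4 := hexp (J (e 2))
    rw [hJ20, hJ22, hJ24] at h4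
    have hω43 : ω (e 4) (e 3) = by exact -ω (e 3) (e 4) := hskew (e 4) (e 3)
    rw [hL40, hL42, hL44, hω43, hc1, hc2, ← hb] at h4
    rw [h2, h4]; ring
  have hω41 : ω (e 4) (e 1) = 0 := by
    have : b * ω (e 4) (e 1) = - (b * ω (e 4) (e 1)) := by rw [← hc3] at hc4; linarith [hc4]
    have hb2 : b * ω (e 4) (e 1) = 0 := by linarith
    rcases mul_eq_zero.1 hb2 with h | h
    · exact absurd h hbne
    · exact h
  -- e4 is degenerate
  have hz : e 4 = 0 := by
    apply hnd
    intro v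
    rw [hexp v, hL40, hL42, hL44, hω41, hc2,
      show ω (e 4) (e 3) = 0 by rw [hskew (e 4) (e 3), hc1]; ring]
    ring
  have := congrFun hz 4
  simp [he] at this
end
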